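/- arXiv:1806.09644 — 2 statements merged into one kernel-verified Lean document; each statement's English description precedes it below -/
import Mathlib

section
/- If a sequence of pairs of trajectories (τ(p_N, θ_N)) and (τ(p'_N, θ'_N)) is such that for each N both trajectories realize the initial word E₁…E_N of a fixed infinite sequence (Eᵢ), and the translation distances d(E₁…E_N) tend to infinity as N → ∞, then θ_N and θ'_N converge to a common limit. -/
/-!
The angles realizing the `N`-th initial word form nested sets whose diameters are at most
`arctan (2 D / d N) → 0`. Hence `θ` is a Cauchy sequence, and `θ'` stays within the same
vanishing bound of `θ`, so both converge to the same limit.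
-/

open Filter Topology

section NestedRealizations

variable {α : Type*} [PseudoMetricSpace α] {Realizes : α → ℕ → Prop} {b : ℕ → ℝ}

theorem cauchySeq_of_realizes_of_dist_le
    (hmono : ∀ x N M, N ≤ M → Realizes x M → Realizes x N)
    (hbound : ∀ x y N, Realizes x N → Realizes y N → dist x y ≤ b N)
    (hb : Tendsto b atTop (𝓝 0)) {u : ℕ → α} (hu : ∀ N, Realizes (u N) N) :
    CauchySeq u :=
  cauchySeq_of_le_tendsto_0 b
    (fun n m N hn hm => hbound _ _ N (hmono _ N n hn (hu n)) (hmono _ N m hm (hu m))) hb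

theorem exists_tendsto_of_realizes_of_dist_le [CompleteSpace α]
    (hmono : ∀ x N M, N ≤ M → Realizes x M → Realizes x N)
    (hbound : ∀ x y N, Realizes x N → Realizes y N → dist x y ≤ b N)
    (hb : Tendsto b atTop (𝓝 0)) {u v : ℕ → α}
    (hu : ∀ N, Realizes (u N) N) (hv : ∀ N, Realizes (v N) N) :
    ∃ L, Tendsto u atTop (𝓝 L) ∧ Tendsto v atTop (𝓝 L) := by
  obtain ⟨L, huL⟩ :=
    cauchySeq_tendsto_of_complete (cauchySeq_of_realizes_of_dist_le hmono hbound hb hu)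
  have hdist : Tendsto (fun n => dist (u n) (v n)) atTop (𝓝 0) :=
    squeeze_zero (fun _ => dist_nonneg) (fun n => hbound _ _ n (hu n) (hv n)) hb
  exact ⟨L, huL, huL.congr_dist hdist⟩

end NestedRealizations

theorem Real.tendsto_arctan_div_atTop {ι : Type*} {l : Filter ι} {d : ι → ℝ}
    (hd : Tendsto d l atTop) (c : ℝ) :
    Tendsto (fun i => Real.arctan (c / d i)) l (𝓝 0) := by
  have h := (Real.continuous_arctan.tendsto 0).comp
    ((tendsto_const_nhds (x := c)).div_atTop hd)
  rwa [Real.arctan_zero] at h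

theorem angles_converge_to_common_limit_general (D : ℝ)
    (Realizes : ℝ → ℕ → Prop) (d : ℕ → ℝ)
    (hdtop : Filter.Tendsto d Filter.atTop Filter.atTop)
    (hmono : ∀ (φ : ℝ) (N M : ℕ), N ≤ M → Realizes φ M → Realizes φ N)
    (hbound : ∀ (φ ψ : ℝ) (N : ℕ), Realizes φ N → Realizes ψ N →
      |φ - ψ| ≤ Real.arctan (2 * D / d N))
    (θ θ' : ℕ → ℝ)
    (hθ : ∀ N, Realizes (θ N) N) (hθ' : ∀ N, Realizes (θ' N) N) :
    ∃ L : ℝ, Filter.Tendsto θ Filter.atTop (nhds L) ∧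
      Filter.Tendsto θ' Filter.atTop (nhds L) :=
  exists_tendsto_of_realizes_of_dist_le hmono
    (fun φ ψ N hφ hψ => (Real.dist_eq φ ψ).trans_le (hbound φ ψ N hφ hψ))
    (Real.tendsto_arctan_div_atTop hdtop _) hθ hθ'

/-- If for each `N` the angles `θ N` and `θ' N` of two
trajectories both realize the initial word `E₁…E_N` (realization of a longer
initial word implies realization of the shorter ones), any two angles
realizing the length-`N` word differ by at most `arctan (2·diam P / d N)`, and
the translation distances `d N` tend to infinity, then `θ_N` and `θ'_N`
converge to a common limit. -/
theorem angles_converge_to_common_limit (D : ℝ) (hD : 0 ≤ D)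
    (Realizes : ℝ → ℕ → Prop) (d : ℕ → ℝ)
    (hdpos : ∀ N, 0 < d N)
    (hdtop : Filter.Tendsto d Filter.atTop Filter.atTop)
    (hmono : ∀ (φ : ℝ) (N M : ℕ), N ≤ M → Realizes φ M → Realizes φ N)
    (hbound : ∀ (φ ψ : ℝ) (N : ℕ), Realizes φ N → Realizes ψ N →
      |φ - ψ| ≤ Real.arctan (2 * D / d N))
    (θ θ' : ℕ → ℝ)
    (hθ : ∀ N, Realizes (θ N) N) (hθ' : ∀ N, Realizes (θ' N) N) :
    ∃ L : ℝ, Filter.Tendsto θ Filter.atTop (nhds L) ∧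
      Filter.Tendsto θ' Filter.atTop (nhds L) :=
  angles_converge_to_common_limit_general D Realizes d hdtop hmono hbound θ θ' hθ hθ'
end

section
/- If a nonsingular billiard trajectory τ realizes a finite word w = E₁…Eₙ, then there exists ε > 0 such that every trajectory whose unfolded segment lies in the ε-tubular neighborhood of the unfolded segment of τ and is parallel to τ also realizes w. Consequently, every finite word realized by some (possibly singular) trajectory is realized by a nonsingular trajectory. -/
/-- A (possibly singular) trajectory, given by a basepoint `p` and direction
`v` in the development, realizes the word `w = E₁…Eₙ` if it crosses the open
interiors of the developed edges `E i` in order, transversely. -/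
def RealizesWord (n : ℕ) (E : Fin n → (ℝ × ℝ) × (ℝ × ℝ)) (p v : ℝ × ℝ) : Prop :=
  v ≠ 0 ∧ (∀ i : Fin n, ¬ ∃ c : ℝ, (E i).2 - (E i).1 = c • v) ∧
    ∃ t : Fin n → ℝ, StrictMono t ∧
      ∀ i : Fin n, p + t i • v ∈ openSegment ℝ (E i).1 (E i).2

/-- A trajectory is singular if it hits a vertex of the development. -/
def SingularTraj (V : Finset (ℝ × ℝ)) (p v : ℝ × ℝ) : Prop :=
  ∃ t : ℝ, p + t • v ∈ V

open Set

/-!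
The crossing of the line `q + t • v` with the line through the endpoints of an edge is given by
Cramer's rule, so its time and its position on the edge depend continuously on the base point `q`.
Realizing the word says that these positions lie in `(0, 1)` and that the times increase: an open
condition on `q`, invariant under sliding `q` along `v`, which gives the tube. Only finitely many
lines parallel to `v` pass through a vertex, so a small shift of `p` transverse to `v` stays in the
tube and is nonsingular.
-/

noncomputable def wedge (x y : ℝ × ℝ) : ℝ := x.1 * y.2 - x.2 * y.1

lemma wedge_ne_zero {v d : ℝ × ℝ} (hv : v ≠ 0) (hd : ¬ ∃ c : ℝ, d = c • v) : wedge v d ≠ 0 := by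
  intro h
  simp only [wedge] at h
  apply hd
  by_cases h1 : v.1 = 0
  · have h2 : v.2 ≠ 0 := fun h2 => hv (Prod.ext h1 h2)
    refine ⟨d.2 / v.2, Prod.ext ?_ ?_⟩ <;>
      simp only [Prod.smul_fst, Prod.smul_snd, smul_eq_mul] <;> field_simp
    linarith
  · refine ⟨d.1 / v.1, Prod.ext ?_ ?_⟩ <;>
      simp only [Prod.smul_fst, Prod.smul_snd, smul_eq_mul] <;> field_simp
    linarith

lemma wedge_add_smul (v p w : ℝ × ℝ) (δ : ℝ) : wedge v (p + δ • w) = wedge v p + δ * wedge v w := by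
  simp only [wedge, Prod.fst_add, Prod.snd_add, Prod.smul_fst, Prod.smul_snd, smul_eq_mul]
  ring

lemma wedge_self (v : ℝ × ℝ) : wedge v v = 0 := by
  simp only [wedge]; ring

section Crossing

variable (v a b : ℝ × ℝ)

-- Cramer's rule for `q + t • v = a + u • (b - a)`: `crossTime` is `t` and `crossParam` is `u`.
noncomputable def crossTime (q : ℝ × ℝ) : ℝ := wedge (a - q) (b - a) / wedge v (b - a)

noncomputable def crossParam (q : ℝ × ℝ) : ℝ := wedge (a - q) v / wedge v (b - a)

@[fun_prop]
lemma continuous_crossTime : Continuous (crossTime v a b) := by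
  unfold crossTime wedge; fun_prop

@[fun_prop]
lemma continuous_crossParam : Continuous (crossParam v a b) := by
  unfold crossParam wedge; fun_prop

variable {v a b}

lemma add_crossTime_smul (h : wedge v (b - a) ≠ 0) (q : ℝ × ℝ) :
    q + crossTime v a b q • v = AffineMap.lineMap a b (crossParam v a b q) := by
  have hD := mul_inv_cancel₀ h
  rw [AffineMap.lineMap_apply_module]
  simp only [crossTime, crossParam, div_eq_mul_inv]
  simp only [wedge, Prod.fst_sub, Prod.snd_sub] at hD ⊢
  ext <;> simp only [Prod.fst_add, Prod.snd_add, Prod.smul_fst, Prod.smul_snd, smul_eq_mul]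
  · linear_combination (a.1 - q.1) * hD
  · linear_combination (a.2 - q.2) * hD

lemma eq_crossTime_of_add_smul_eq (h : wedge v (b - a) ≠ 0) {q : ℝ × ℝ} {t u : ℝ}
    (hq : q + t • v = AffineMap.lineMap a b u) :
    t = crossTime v a b q ∧ u = crossParam v a b q := by
  rw [AffineMap.lineMap_apply_module] at hq
  have h1 := congrArg Prod.fst hq
  have h2 := congrArg Prod.snd hq
  simp only [Prod.fst_add, Prod.snd_add, Prod.smul_fst, Prod.smul_snd, smul_eq_mul] at h1 h2
  simp only [crossTime, crossParam, wedge, Prod.fst_sub, Prod.snd_sub] at h ⊢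
  constructor <;> rw [eq_div_iff h]
  · linear_combination (b.2 - a.2) * h1 - (b.1 - a.1) * h2
  · linear_combination v.2 * h1 - v.1 * h2

end Crossing

lemma realizesWord_iff {n : ℕ} {E : Fin n → (ℝ × ℝ) × (ℝ × ℝ)} {v : ℝ × ℝ} (hv : v ≠ 0)
    (hE : ∀ i, ¬ ∃ c : ℝ, (E i).2 - (E i).1 = c • v) (q : ℝ × ℝ) :
    RealizesWord n E q v ↔ (∀ i, crossParam v (E i).1 (E i).2 q ∈ Ioo 0 1) ∧
      StrictMono fun i => crossTime v (E i).1 (E i).2 q := by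
  have hw i := wedge_ne_zero hv (hE i)
  simp only [RealizesWord, openSegment_eq_image_lineMap]
  constructor
  · rintro ⟨-, -, t, ht, hmem⟩
    choose u hu hqu using hmem
    have hcross i := eq_crossTime_of_add_smul_eq (hw i) (hqu i).symm
    refine ⟨fun i => (hcross i).2 ▸ hu i, ?_⟩
    convert ht using 2 with i
    exact (hcross i).1.symm
  · rintro ⟨hu, ht⟩
    exact ⟨hv, hE, _, ht, fun i => ⟨_, hu i, (add_crossTime_smul (hw i) q).symm⟩⟩

namespace RealizesWord

variable {n : ℕ} {E : Fin n → (ℝ × ℝ) × (ℝ × ℝ)} {p v : ℝ × ℝ}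

lemma add_smul (h : RealizesWord n E p v) (s : ℝ) : RealizesWord n E (p + s • v) v := by
  obtain ⟨hv, hE, t, ht, hmem⟩ := h
  refine ⟨hv, hE, fun i => t i - s, fun i j hij => sub_lt_sub_right (ht hij) s, fun i => ?_⟩
  convert hmem i using 1
  module

lemma isOpen_setOf (n : ℕ) (E : Fin n → (ℝ × ℝ) × (ℝ × ℝ)) (v : ℝ × ℝ) :
    IsOpen {q | RealizesWord n E q v} := by
  by_cases hvE : v ≠ 0 ∧ ∀ i, ¬ ∃ c : ℝ, (E i).2 - (E i).1 = c • v
  · simp only [realizesWord_iff hvE.1 hvE.2, StrictMono, ofPred_and, ofPred_forall]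
    refine .inter (isOpen_iInter_of_finite fun i => isOpen_Ioo.preimage (by fun_prop))
      (isOpen_iInter_of_finite fun i => isOpen_iInter_of_finite fun j =>
        isOpen_iInter_of_finite fun _ => isOpen_lt (by fun_prop) (by fun_prop))
  · convert isOpen_empty
    exact eq_empty_of_forall_notMem fun q hq => hvE ⟨hq.1, hq.2.1⟩

lemma exists_tube (h : RealizesWord n E p v) :
    ∃ ε > 0, ∀ p' : ℝ × ℝ, (∃ s : ℝ, dist p' (p + s • v) < ε) → RealizesWord n E p' v := by
  obtain ⟨ε, hε, hball⟩ := Metric.isOpen_iff.mp (isOpen_setOf n E v) p h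
  refine ⟨ε, hε, fun p' ⟨s, hs⟩ => ?_⟩
  have hshift : p' - s • v ∈ Metric.ball p ε := by
    rwa [Metric.mem_ball, dist_eq_norm, sub_sub, add_comm, ← dist_eq_norm]
  simpa only [sub_add_cancel] using (hball hshift).add_smul s

end RealizesWord

lemma finite_setOf_singularTraj_add_smul (V : Finset (ℝ × ℝ)) {v w : ℝ × ℝ} (hw : wedge v w ≠ 0)
    (p : ℝ × ℝ) : {δ : ℝ | SingularTraj V (p + δ • w) v}.Finite := by
  refine (V.finite_toSet.image fun z => (wedge v z - wedge v p) / wedge v w).subset ?_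
  rintro δ ⟨τ, hτ⟩
  refine ⟨_, hτ, ?_⟩
  dsimp only
  rw [wedge_add_smul, wedge_add_smul, wedge_self]
  field_simp
  ring

lemma exists_not_singularTraj_dist_lt (V : Finset (ℝ × ℝ)) {v : ℝ × ℝ} (hv : v ≠ 0) (p : ℝ × ℝ)
    {ε : ℝ} (hε : 0 < ε) : ∃ p', dist p' p < ε ∧ ¬ SingularTraj V p' v := by
  set w : ℝ × ℝ := (-v.2, v.1)
  have hw : wedge v w ≠ 0 := by
    simp only [wedge, w]
    intro h
    apply hv
    ext <;> refine (pow_eq_zero_iff two_ne_zero).mp ?_ <;> nlinarith [sq_nonneg v.1, sq_nonneg v.2]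
  have hw0 : 0 < ‖w‖ := norm_pos_iff.mpr fun h => hw (by simp [h, wedge])
  obtain ⟨δ, ⟨hδ0, hδε⟩, hδ⟩ := ((Ioo_infinite (div_pos hε hw0)).sdiff
    (finite_setOf_singularTraj_add_smul V hw p)).nonempty
  refine ⟨p + δ • w, ?_, hδ⟩
  rw [dist_eq_norm, add_sub_cancel_left, norm_smul, Real.norm_of_nonneg hδ0.le]
  exact (lt_div_iff₀ hw0).mp hδε

theorem tubular_neighborhood_realizes_general (V : Finset (ℝ × ℝ)) (n : ℕ)
    (E : Fin n → (ℝ × ℝ) × (ℝ × ℝ))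
    (p v : ℝ × ℝ) (hreal : RealizesWord n E p v) :
    (¬ SingularTraj V p v →
      ∃ ε > 0, ∀ p' : ℝ × ℝ, (∃ s : ℝ, dist p' (p + s • v) < ε) →
        RealizesWord n E p' v) ∧
    (∃ p' : ℝ × ℝ, RealizesWord n E p' v ∧ ¬ SingularTraj V p' v) := by
  obtain ⟨ε, hε, htube⟩ := hreal.exists_tube
  obtain ⟨p', hp', hsing⟩ := exists_not_singularTraj_dist_lt V hreal.1 p hε
  exact ⟨fun _ => ⟨ε, hε, htube⟩, p', htube p' ⟨0, by rwa [zero_smul, add_zero]⟩, hsing⟩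

/-- If a trajectory `(p, v)` realizes the finite word `w` in the
development (whose vertex set is the finite set `V`, containing all edge
endpoints), then: (1) if `(p, v)` is nonsingular, there is `ε > 0` such that
every parallel trajectory lying in the `ε`-tubular neighborhood of it also
realizes `w`; and (2) consequently, `w` is realized by some nonsingular
trajectory. -/
theorem tubular_neighborhood_realizes (V : Finset (ℝ × ℝ)) (n : ℕ)
    (E : Fin n → (ℝ × ℝ) × (ℝ × ℝ))
    (hEV : ∀ i : Fin n, (E i).1 ∈ V ∧ (E i).2 ∈ V)
    (p v : ℝ × ℝ) (hreal : RealizesWord n E p v) :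
    (¬ SingularTraj V p v →
      ∃ ε > 0, ∀ p' : ℝ × ℝ, (∃ s : ℝ, dist p' (p + s • v) < ε) →
        RealizesWord n E p' v) ∧
    (∃ p' : ℝ × ℝ, RealizesWord n E p' v ∧ ¬ SingularTraj V p' v) :=
  tubular_neighborhood_realizes_general V n E p v hreal
end
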